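/- In the graded ring A = ℂ[α⁽⁰⁾, α⁽¹⁾, ...]/im D with deg α⁽ⁿ⁾ = n+1, for each k ≥ 0 there is at most one element 𝒥⁽ᵏ⁾ of degree k+2 with leading term (1/(k+2)!)(α⁽⁰⁾)^{k+2} annihilated by the degree-2 operator E = E₁' + D·α⁽⁰⁾-part + E₂ described below; in particular, in low degrees: the unique such elements of degree 2 and 3 are 𝒥⁽⁰⁾ = (1/2)(α⁽⁰⁾)², 𝒥⁽¹⁾ = (1/6)(α⁽⁰⁾)³ (all other degree-2 and degree-3 monomials being total derivatives modulo im D). -/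

import Mathlib

/-!
Sending `α⁽⁰⁾ ↦ 1` and `α⁽ⁿ⁺¹⁾ ↦ 0` kills every total derivative, since each term of `D g`
contains some `α⁽ⁿ⁺¹⁾`, but sends `c (α⁽⁰⁾)ᵏ` to `c`; so no nonzero multiple of `(α⁽⁰⁾)ᵏ` is a
total derivative. Conversely, a homogeneous polynomial of weight 2 or 3 is a combination of
monomials of that weight, and apart from `(α⁽⁰⁾)ᵏ` these are `α⁽¹⁾ = D α⁽⁰⁾`, `α⁽²⁾ = D α⁽¹⁾` and
`α⁽⁰⁾ α⁽¹⁾ = D ((α⁽⁰⁾)² / 2)`.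
-/

open MvPolynomial

/-- The total-derivative operator `D` on `A = ℂ[α⁽⁰⁾, α⁽¹⁾, ...]`,
with `D(α⁽ⁿ⁾) = α⁽ⁿ⁺¹⁾`. -/
noncomputable def totalDer :
    Derivation ℂ (MvPolynomial ℕ ℂ) (MvPolynomial ℕ ℂ) :=
  MvPolynomial.mkDerivation ℂ (fun n => X (n + 1))

theorem MvPolynomial.IsWeightedHomogeneous.mem_of_forall_monomial_mem {R σ M : Type*}
    [CommSemiring R] [AddCommMonoid M] {w : σ → M} {m : M} {f : MvPolynomial σ R}
    (hf : f.IsWeightedHomogeneous w m) {S : Submodule R (MvPolynomial σ R)}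
    (hS : ∀ d, Finsupp.weight w d = m → monomial d 1 ∈ S) : f ∈ S := by
  rw [f.as_sum]
  refine S.sum_mem fun d hd => ?_
  rw [← mul_one (coeff d f), ← smul_eq_mul, ← smul_monomial]
  exact S.smul_mem _ (hS d (hf (mem_support_iff.mp hd)))

section Weight

variable {d : ℕ →₀ ℕ} {m : ℕ}

theorem support_subset_range_of_weight_le (h : Finsupp.weight (fun n : ℕ => n + 1) d ≤ m) :
    d.support ⊆ Finset.range m := fun _ hn =>
  Finset.mem_range.mpr
    ((Finsupp.le_weight_of_ne_zero' (fun n : ℕ => n + 1) (Finsupp.mem_support_iff.mp hn)).trans h)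

theorem weight_eq_sum_range_of_weight_le (h : Finsupp.weight (fun n : ℕ => n + 1) d ≤ m) :
    Finsupp.weight (fun n : ℕ => n + 1) d = ∑ n ∈ Finset.range m, d n * (n + 1) := by
  rw [Finsupp.weight_apply, Finsupp.sum_of_support_subset _ (support_subset_range_of_weight_le h)]
  · simp only [smul_eq_mul]
  · simp

theorem monomial_one_eq_prod_range_of_weight_le {R : Type*} [CommSemiring R]
    (h : Finsupp.weight (fun n : ℕ => n + 1) d ≤ m) :
    (monomial d 1 : MvPolynomial ℕ R) = ∏ n ∈ Finset.range m, X n ^ d n := by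
  rw [monomial_eq, C_1, one_mul,
    Finsupp.prod_of_support_subset _ (support_subset_range_of_weight_le h)]
  simp

end Weight

theorem totalDer_X (n : ℕ) : totalDer (X n) = X (n + 1) :=
  mkDerivation_X _ _ _

theorem aeval_totalDer_eq_zero {B : Type*} [CommSemiring B] [Algebra ℂ B] {x : ℕ → B}
    (hx : ∀ n, x (n + 1) = 0) (g : MvPolynomial ℕ ℂ) : aeval x (totalDer g) = 0 := by
  induction g using MvPolynomial.induction_on with
  | C a => simp
  | add p q hp hq => rw [map_add, map_add, hp, hq, add_zero]
  | mul_X p n hp => simp [Derivation.leibniz, totalDer_X, hp, hx]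

theorem eq_zero_of_smul_X_zero_pow_eq_totalDer {k : ℕ} {c : ℂ} {g : MvPolynomial ℕ ℂ}
    (h : c • (X 0 : MvPolynomial ℕ ℂ) ^ k = totalDer g) : c = 0 := by
  have := congrArg (aeval (Pi.single 0 1 : ℕ → ℂ)) h
  rwa [aeval_totalDer_eq_zero (fun n => Pi.single_eq_of_ne n.succ_ne_zero _), map_smul, map_pow,
    aeval_X, Pi.single_eq_same, one_pow, smul_eq_mul, mul_one] at this

theorem exists_eq_smul_add_totalDer_of_mem {k : ℕ} {f : MvPolynomial ℕ ℂ}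
    (hf : f ∈ (ℂ ∙ (X 0 : MvPolynomial ℕ ℂ) ^ k) ⊔ LinearMap.range totalDer.toLinearMap) :
    ∃ (c : ℂ) (g : MvPolynomial ℕ ℂ), f = c • X 0 ^ k + totalDer g := by
  obtain ⟨_, hp, _, ⟨g, rfl⟩, rfl⟩ := Submodule.mem_sup.mp hf
  obtain ⟨c, rfl⟩ := Submodule.mem_span_singleton.mp hp
  exact ⟨c, g, rfl⟩

theorem monomial_mem_of_weight_eq_two {d : ℕ →₀ ℕ}
    (hd : Finsupp.weight (fun n : ℕ => n + 1) d = 2) :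
    monomial d 1 ∈ (ℂ ∙ (X 0 : MvPolynomial ℕ ℂ) ^ 2) ⊔ LinearMap.range totalDer.toLinearMap := by
  have hw := weight_eq_sum_range_of_weight_le hd.le
  rw [hd, Finset.sum_range_succ, Finset.sum_range_one] at hw
  rw [monomial_one_eq_prod_range_of_weight_le hd.le, Finset.prod_range_succ, Finset.prod_range_one]
  obtain ⟨h0, h1⟩ | ⟨h0, h1⟩ : d 0 = 2 ∧ d 1 = 0 ∨ d 0 = 0 ∧ d 1 = 1 := by omega
  · rw [h0, h1, pow_zero, mul_one]
    exact Submodule.mem_sup_left (Submodule.mem_span_singleton_self _)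
  · rw [h0, h1, pow_zero, pow_one, one_mul]
    exact Submodule.mem_sup_right ⟨X 0, totalDer_X 0⟩

theorem monomial_mem_of_weight_eq_three {d : ℕ →₀ ℕ}
    (hd : Finsupp.weight (fun n : ℕ => n + 1) d = 3) :
    monomial d 1 ∈ (ℂ ∙ (X 0 : MvPolynomial ℕ ℂ) ^ 3) ⊔ LinearMap.range totalDer.toLinearMap := by
  have hw := weight_eq_sum_range_of_weight_le hd.le
  rw [hd, Finset.sum_range_succ, Finset.sum_range_succ, Finset.sum_range_one] at hw
  rw [monomial_one_eq_prod_range_of_weight_le hd.le, Finset.prod_range_succ, Finset.prod_range_succ,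
    Finset.prod_range_one]
  obtain ⟨h0, h1, h2⟩ | ⟨h0, h1, h2⟩ | ⟨h0, h1, h2⟩ :
      d 0 = 3 ∧ d 1 = 0 ∧ d 2 = 0 ∨ d 0 = 1 ∧ d 1 = 1 ∧ d 2 = 0 ∨ d 0 = 0 ∧ d 1 = 0 ∧ d 2 = 1 := by
    omega
  · rw [h0, h1, h2, pow_zero, pow_zero, mul_one, mul_one]
    exact Submodule.mem_sup_left (Submodule.mem_span_singleton_self _)
  · have hD : totalDer ((1 / 2 : ℂ) • X 0 ^ 2) = X 0 * X 1 := by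
      rw [totalDer.map_smul, Derivation.leibniz_pow, totalDer_X, smul_eq_mul, pow_one]
      module
    rw [h0, h1, h2, pow_one, pow_one, pow_zero, mul_one]
    exact Submodule.mem_sup_right ⟨_, hD⟩
  · rw [h0, h1, h2, pow_zero, pow_zero, pow_one, one_mul, one_mul]
    exact Submodule.mem_sup_right ⟨X 1, totalDer_X 1⟩

/-- In the graded ring `A = ℂ[α⁽⁰⁾,α⁽¹⁾,...]/im D` with `deg α⁽ⁿ⁾ = n+1`, the
degree-2 component is 1-dimensional spanned by `(α⁽⁰⁾)²` and the degree-3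
component is 1-dimensional spanned by `(α⁽⁰⁾)³`; in particular
`𝒥⁽⁰⁾ = (1/2)(α⁽⁰⁾)²` and `𝒥⁽¹⁾ = (1/6)(α⁽⁰⁾)³` are the unique degree-2 and
degree-3 elements with these leading terms modulo total derivatives. -/
theorem degree_two_three_mod_totalDer :
    (∀ f : MvPolynomial ℕ ℂ, f.IsWeightedHomogeneous (fun n : ℕ => n + 1) 2 →
      ∃ (c : ℂ) (g : MvPolynomial ℕ ℂ), f = c • (X 0) ^ 2 + totalDer g) ∧
    (∀ (c : ℂ) (g : MvPolynomial ℕ ℂ), c • (X 0 : MvPolynomial ℕ ℂ) ^ 2 = totalDer g → c = 0) ∧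
    (∀ f : MvPolynomial ℕ ℂ, f.IsWeightedHomogeneous (fun n : ℕ => n + 1) 3 →
      ∃ (c : ℂ) (g : MvPolynomial ℕ ℂ), f = c • (X 0) ^ 3 + totalDer g) ∧
    (∀ (c : ℂ) (g : MvPolynomial ℕ ℂ), c • (X 0 : MvPolynomial ℕ ℂ) ^ 3 = totalDer g → c = 0) :=
  ⟨fun _ hf => exists_eq_smul_add_totalDer_of_mem
      (hf.mem_of_forall_monomial_mem fun _ => monomial_mem_of_weight_eq_two),
    fun _ _ => eq_zero_of_smul_X_zero_pow_eq_totalDer,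
    fun _ hf => exists_eq_smul_add_totalDer_of_mem
      (hf.mem_of_forall_monomial_mem fun _ => monomial_mem_of_weight_eq_three),
    fun _ _ => eq_zero_of_smul_X_zero_pow_eq_totalDer⟩
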